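/- arXiv:2403.09406 — 2 statements merged into one kernel-verified Lean document; each statement's English description precedes it below -/
import Mathlib

section
/- Let σ(u₁,u₃) = u₁³/3 − u₃, and define f₂(u) = −σ₃(u)/σ₁(u) and g₂(u) = ℘₁₁(2u)/2 where ℘₁₁(v) = (σ₁(v)² − σ(v)σ₁₁(v))/σ(v)². Then on the set where u₁ ≠ 0, 4u₁³ − 3u₃ ≠ 0 one has f₂(u) − g₂(u) = σ(u) · 3(10u₁³ − 3u₃) / (u₁²(4u₁³ − 3u₃)²). -/
noncomputable section

def σr (u₁ u₃ : ℂ) : ℂ := u₁ ^ 3 / 3 - u₃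
def S1 (u₁ u₃ : ℂ) : ℂ := u₁ ^ 2
def S3 (u₁ u₃ : ℂ) : ℂ := -1
def S11 (u₁ u₃ : ℂ) : ℂ := 2 * u₁
/-- `℘₁₁` expressed via the sigma function. -/
def P11s (v₁ v₃ : ℂ) : ℂ :=
  ((S1 v₁ v₃) ^ 2 - σr v₁ v₃ * S11 v₁ v₃) / (σr v₁ v₃) ^ 2
def f2 (u₁ u₃ : ℂ) : ℂ := -(S3 u₁ u₃) / S1 u₁ u₃
def g2 (u₁ u₃ : ℂ) : ℂ := P11s (2 * u₁) (2 * u₃) / 2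

theorem σr_two_mul (u₁ u₃ : ℂ) : σr (2 * u₁) (2 * u₃) = 2 / 3 * (4 * u₁ ^ 3 - 3 * u₃) := by
  unfold σr
  ring

theorem f2_eq (u₁ u₃ : ℂ) : f2 u₁ u₃ = 1 / u₁ ^ 2 := by
  simp only [f2, S3, S1, neg_neg]

-- Where `4 * u₁ ^ 3 = 3 * u₃`, both sides are `0` by the convention `x / 0 = 0`.
theorem g2_eq (u₁ u₃ : ℂ) :
    g2 u₁ u₃ = 3 * u₁ * (2 * u₁ ^ 3 + 3 * u₃) / (4 * u₁ ^ 3 - 3 * u₃) ^ 2 := by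
  simp only [g2, P11s, S1, S11, σr_two_mul]
  field_simp
  ring

theorem stmt_10 (u₁ u₃ : ℂ) (h₁ : u₁ ≠ 0) (h₂ : 4 * u₁ ^ 3 - 3 * u₃ ≠ 0) :
    f2 u₁ u₃ - g2 u₁ u₃ =
      σr u₁ u₃ * (3 * (10 * u₁ ^ 3 - 3 * u₃)) /
        (u₁ ^ 2 * (4 * u₁ ^ 3 - 3 * u₃) ^ 2) := by
  rw [f2_eq, g2_eq, σr, div_sub_div _ _ (pow_ne_zero 2 h₁) (pow_ne_zero 2 h₂)]
  congr 1
  ring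
end
end

section
/- Let σ be a holomorphic function on ℂ² with zero set W, and assume the following product property: whenever G, H are holomorphic on ℂ² and each is not identically zero on W, the product GH is not identically zero on W. Suppose m, n are integers with m ≥ n and G₁, G₂, H₁, H₂ are holomorphic functions on ℂ², none identically zero on W, such that σ^m·G₁/G₂ = σ^n·H₁/H₂ as meromorphic functions (equivalently σ^{m−n}G₁H₂ = G₂H₁ on ℂ²). Then m = n. -/
theorem stmt_18 (σ : ℂ × ℂ → ℂ) (hσ : Differentiable ℂ σ)
    (W : Set (ℂ × ℂ)) (hW : W = {u | σ u = 0}) (hWne : W.Nonempty)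
    (hprod : ∀ G H : ℂ × ℂ → ℂ, Differentiable ℂ G → Differentiable ℂ H →
      (¬ ∀ u ∈ W, G u = 0) → (¬ ∀ u ∈ W, H u = 0) → ¬ ∀ u ∈ W, G u * H u = 0)
    (m n : ℤ) (hmn : m ≥ n)
    (G₁ G₂ H₁ H₂ : ℂ × ℂ → ℂ)
    (hG₁ : Differentiable ℂ G₁) (hG₂ : Differentiable ℂ G₂)
    (hH₁ : Differentiable ℂ H₁) (hH₂ : Differentiable ℂ H₂)
    (hG₁W : ¬ ∀ u ∈ W, G₁ u = 0) (hG₂W : ¬ ∀ u ∈ W, G₂ u = 0)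
    (hH₁W : ¬ ∀ u ∈ W, H₁ u = 0) (hH₂W : ¬ ∀ u ∈ W, H₂ u = 0)
    (heq : ∀ u : ℂ × ℂ, σ u ^ (m - n).toNat * G₁ u * H₂ u = G₂ u * H₁ u) :
    m = n := by
  by_contra h
  have hlt : n < m := lt_of_le_of_ne hmn (Ne.symm h)
  have hk : (m - n).toNat ≠ 0 := by omega
  apply hprod G₂ H₁ hG₂ hH₁ hG₂W hH₁W
  intro u hu
  have hσu : σ u = 0 := by rw [hW] at hu; exact hu
  rw [← heq u, hσu, zero_pow hk, zero_mul, zero_mul]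
end
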